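/- arXiv:1806.00856 — 3 statements merged into one kernel-verified Lean document; each statement's English description precedes it below -/
import Mathlib

section
/- Let k be a field of characteristic 3, let f = (x₁² + x₀x₂)·x₀·(x₁² + x₀x₂ + x₀²) ∈ k[x₀,x₁,x₂], and let fᵢ = ∂f/∂xᵢ. Then the syzygy module {(a,b,c) ∈ k[x₀,x₁,x₂]³ : a·f₀ + b·f₁ + c·f₂ = 0}, i.e., the kernel of the linear map k[x₀,x₁,x₂]³ → k[x₀,x₁,x₂] sending (a,b,c) to a·f₀ + b·f₁ + c·f₂, equals the submodule spanned by the two elements (0, x₀, x₁) and (x₀³ − x₀x₁² − x₀²x₂, x₁³, −x₀²x₂ − x₁²x₂). -/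
open MvPolynomial

/-!
In characteristic 3 the partial derivatives are `f₀ = x₁⁴ + x₀x₁²x₂ + x₀³x₂`, `f₁ = x₀x₁w` and
`f₂ = -x₀²w`, where `w = x₁² + x₀x₂ - x₀²` is prime: as a polynomial in `x₂` it is linear with
coprime coefficients `x₀` and `x₁² - x₀²`. A syzygy `(a, b, c)` thus says
`f₀ a = x₀ w (x₀ c - x₁ b)`. Neither `x₀` nor `w` divides `f₀`, so `a = x₀ w s` and
`x₀ c - x₁ b = f₀ s`; the latter rearranges to `x₁ (b + s x₁³) = x₀ (c - s x₂ (x₁² + x₀²))`, whence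
`b + s x₁³ = x₀ t` and `c - s x₂ (x₁² + x₀²) = x₁ t`, i.e.
`(a, b, c) = t (0, x₀, x₁) - s (x₀³ - x₀x₁² - x₀²x₂, x₁³, -x₀²x₂ - x₁²x₂)`.
-/

theorem not_dvd_of_map_eq_zero {R S : Type*} [CommSemiring R] [CommSemiring S] (φ : R →+* S)
    {p q : R} (hp : φ p = 0) (hq : φ q ≠ 0) : ¬ p ∣ q := by
  rintro ⟨r, rfl⟩
  simp [hp] at hq

theorem Prime.exists_eq_mul_of_mul_eq_mul {R : Type*} [CommMonoidWithZero R]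
    [IsCancelMulZero R] {p y a d : R}
    (hp : Prime p) (hpy : ¬ p ∣ y) (h : y * a = p * d) : ∃ t, a = p * t ∧ d = y * t := by
  obtain ⟨t, rfl⟩ := (hp.dvd_or_dvd ⟨d, h⟩).resolve_left hpy
  refine ⟨t, rfl, mul_left_cancel₀ hp.ne_zero ?_⟩
  rw [← h, mul_left_comm]

noncomputable section

variable (k : Type*) [Field k]

def conic : MvPolynomial (Fin 3) k := X 1 ^ 2 + X 0 * X 2 - X 0 ^ 2

def quartic : MvPolynomial (Fin 3) k := X 1 ^ 4 + X 0 * X 1 ^ 2 * X 2 + X 0 ^ 3 * X 2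

theorem prime_conic : Prime (conic k) := by
  let e := (renameEquiv k (Equiv.swap (0 : Fin 3) 2)).trans (finSuccEquiv k 2)
  have he :
      e (conic k) = Polynomial.C (X 1) * Polynomial.X + Polynomial.C (X 0 ^ 2 - X 1 ^ 2) := by
    have h1 : (X 1 : MvPolynomial (Fin 3) k) = X (Fin.succ 0) := rfl
    have h2 : (X 2 : MvPolynomial (Fin 3) k) = X (Fin.succ 1) := rfl
    simp only [e, conic, AlgEquiv.trans_apply, renameEquiv_apply, map_add, map_sub, map_mul,
      map_pow, rename_X]
    simp only [ne_eq, Fin.reduceEq, not_false_eq_true, Equiv.swap_apply_of_ne_of_ne,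
      Equiv.swap_apply_left, Equiv.swap_apply_right, h1, h2, finSuccEquiv_X_zero,
      finSuccEquiv_X_succ]
    ring
  rw [← MulEquiv.prime_iff e, he, ← UniqueFactorizationMonoid.irreducible_iff_prime]
  refine Polynomial.irreducible_C_mul_X_add_C (X_ne_zero 1) ?_
  rw [X_prime.irreducible.isRelPrime_iff_not_dvd]
  exact not_dvd_of_map_eq_zero (eval ![1, 0]) (by simp) (by simp)

theorem X_zero_not_dvd_quartic : ¬ (X 0 : MvPolynomial (Fin 3) k) ∣ quartic k :=
  not_dvd_of_map_eq_zero (eval ![0, 1, 0]) (by simp) (by simp [quartic])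

theorem conic_not_dvd_quartic : ¬ conic k ∣ quartic k :=
  not_dvd_of_map_eq_zero (eval ![1, 0, 1]) (by simp [conic]) (by simp [quartic])

theorem X_zero_not_dvd_X_one : ¬ (X 0 : MvPolynomial (Fin 3) k) ∣ X 1 :=
  not_dvd_of_map_eq_zero (eval ![0, 1, 0]) (by simp) (by simp)

theorem mem_span_of_syzygy {a b c : MvPolynomial (Fin 3) k}
    (h : a * quartic k + b * (X 0 * X 1 * conic k) + c * -(X 0 ^ 2 * conic k) = 0) :
    ![a, b, c] ∈ Submodule.span (MvPolynomial (Fin 3) k)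
      {![0, X 0, X 1],
       ![X 0 ^ 3 - X 0 * X 1 ^ 2 - X 0 ^ 2 * X 2, X 1 ^ 3, -(X 0 ^ 2 * X 2) - X 1 ^ 2 * X 2]} := by
  obtain ⟨a', rfl, ha'⟩ := X_prime.exists_eq_mul_of_mul_eq_mul (X_zero_not_dvd_quartic k)
    (a := a) (d := conic k * (X 0 * c - X 1 * b)) (by linear_combination h)
  obtain ⟨s, rfl, hs⟩ := (prime_conic k).exists_eq_mul_of_mul_eq_mul
    (conic_not_dvd_quartic k) ha'.symm
  obtain ⟨t, hb, hc⟩ := X_prime.exists_eq_mul_of_mul_eq_mul (X_zero_not_dvd_X_one k)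
    (a := b + s * X 1 ^ 3) (d := c - s * X 2 * (X 1 ^ 2 + X 0 ^ 2))
    (by simp only [quartic] at hs; linear_combination -hs)
  obtain rfl : b = X 0 * t - s * X 1 ^ 3 := by linear_combination hb
  obtain rfl : c = X 1 * t + s * X 2 * (X 1 ^ 2 + X 0 ^ 2) := by linear_combination hc
  refine Submodule.mem_span_pair.mpr ⟨t, -s, funext fun i => ?_⟩
  fin_cases i <;> simp [conic] <;> ring

theorem ker_linearCombination_eq_span :
    LinearMap.ker (Fintype.linearCombination (MvPolynomial (Fin 3) k)
        ![quartic k, X 0 * X 1 * conic k, -(X 0 ^ 2 * conic k)])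
      = Submodule.span (MvPolynomial (Fin 3) k)
          {![0, X 0, X 1],
           ![X 0 ^ 3 - X 0 * X 1 ^ 2 - X 0 ^ 2 * X 2, X 1 ^ 3,
             -(X 0 ^ 2 * X 2) - X 1 ^ 2 * X 2]} := by
  refine le_antisymm (fun v hv => ?_) ?_
  · rw [LinearMap.mem_ker, Fintype.linearCombination_apply, Fin.sum_univ_three] at hv
    obtain ⟨a, b, c, rfl⟩ : ∃ a b c, v = ![a, b, c] :=
      ⟨v 0, v 1, v 2, funext fun i => by fin_cases i <;> rfl⟩
    exact mem_span_of_syzygy k (by simpa using hv)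
  · rw [Submodule.span_le, Set.insert_subset_iff, Set.singleton_subset_iff]
    constructor <;>
      simp [Fintype.linearCombination_apply, Fin.sum_univ_three, conic, quartic] <;> ring

theorem pderiv_quintic [CharP k 3] :
    (fun i => pderiv i ((X 1 ^ 2 + X 0 * X 2) * X 0 * (X 1 ^ 2 + X 0 * X 2 + X 0 ^ 2)))
      = ![quartic k, X 0 * X 1 * conic k, -(X 0 ^ 2 * conic k)] := by
  have h3 : (3 : MvPolynomial (Fin 3) k) = 0 := CharP.cast_eq_zero _ 3
  funext i
  fin_cases i <;>
    simp only [Fin.zero_eta, Fin.mk_one, Fin.reduceFinMk, Matrix.cons_val, Derivation.leibniz,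
      Derivation.leibniz_pow, map_add, pderiv_X_self, ne_eq, Fin.reduceEq, not_false_eq_true,
      pderiv_X_of_ne, smul_eq_mul, nsmul_eq_mul, quartic, conic]
  · linear_combination
      (X 1 ^ 2 * X 0 * X 2 + X 1 ^ 2 * X 0 ^ 2 + X 0 ^ 2 * X 2 ^ 2 + X 0 ^ 3 * X 2) * h3
  · linear_combination (X 0 * X 1 ^ 3 + X 0 ^ 2 * X 1 * X 2 + X 0 ^ 3 * X 1) * h3
  · linear_combination (X 0 ^ 2 * X 1 ^ 2 + X 0 ^ 3 * X 2) * h3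

end

/-- In characteristic 3, the syzygy module of the partial derivatives of
`f = (x₁² + x₀x₂)·x₀·(x₁² + x₀x₂ + x₀²)`, i.e. the kernel of
`(a,b,c) ↦ a·f₀ + b·f₁ + c·f₂`, is spanned by `(0, x₀, x₁)` and
`(x₀³ - x₀x₁² - x₀²x₂, x₁³, -x₀²x₂ - x₁²x₂)`. -/
theorem stmt5 (k : Type*) [Field k] [CharP k 3]
    (f : MvPolynomial (Fin 3) k)
    (hf : f = (X 1 ^ 2 + X 0 * X 2) * X 0 * (X 1 ^ 2 + X 0 * X 2 + X 0 ^ 2))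
    (f' : Fin 3 → MvPolynomial (Fin 3) k)
    (hf' : ∀ i, f' i = pderiv i f) :
    LinearMap.ker
        (Fintype.linearCombination (MvPolynomial (Fin 3) k) f')
      = Submodule.span (MvPolynomial (Fin 3) k)
          {![0, X 0, X 1],
           ![X 0 ^ 3 - X 0 * X 1 ^ 2 - X 0 ^ 2 * X 2, X 1 ^ 3,
             -(X 0 ^ 2 * X 2) - X 1 ^ 2 * X 2]} := by
  rw [funext hf', hf, pderiv_quintic, ker_linearCombination_eq_span]
end

section
/- Let k be a field, n ≥ 1, and let f ∈ k[x₀,…,x_n] be homogeneous of degree d with d ≠ 0 in k (char k does not divide d). Write fᵢ = ∂f/∂xᵢ and let g_♭ ∈ k[x₁,…,x_n] denote the dehomogenization of g at x₀ = 1. Then the ideals ((f₀)_♭, (f₁)_♭, …, (f_n)_♭) and (f_♭, ∂f_♭/∂x₁, …, ∂f_♭/∂x_n) of k[x₁,…,x_n] are equal. -/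
/-!
By the chain rule, `∂(g♭)/∂xᵢ = (∂g/∂xᵢ)♭` for `1 ≤ i ≤ n`, so both ideals contain the common
generators `(f₁)♭, …, (fₙ)♭` and differ only in `(f₀)♭` versus `f♭`. Dehomogenizing Euler's
identity `∑ xᵢ fᵢ = d f` gives `(f₀)♭ + ∑ᵢ₌₁ⁿ xᵢ (fᵢ)♭ = d f♭`, and `d` is a unit in `k`.
-/

open MvPolynomial

/-- Dehomogenization at `x₀ = 1`: the `k`-algebra map
`k[x₀,…,xₙ] → k[x₁,…,xₙ]` sending `x₀ ↦ 1` and `xᵢ ↦ xᵢ` for `1 ≤ i ≤ n`. -/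
noncomputable def dehom (k : Type*) [CommSemiring k] (n : ℕ) :
    MvPolynomial (Fin (n + 1)) k →ₐ[k] MvPolynomial (Fin n) k :=
  aeval (Fin.cases (1 : MvPolynomial (Fin n) k) X)

theorem Ideal.span_insert_eq_span_insert_of_sub_mem {R : Type*} [CommRing R] {a b u : R}
    {s : Set R} (hu : IsUnit u) (h : a - u * b ∈ Ideal.span s) :
    Ideal.span (insert a s) = Ideal.span (insert b s) := by
  rw [Ideal.span_insert, Ideal.span_insert]
  apply le_antisymm
  · rw [sup_le_iff, Ideal.span_singleton_le_iff_mem, Ideal.mem_span_singleton_sup]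
    exact ⟨⟨u, a - u * b, h, by ring⟩, le_sup_right⟩
  · obtain ⟨v, rfl⟩ := hu
    rw [sup_le_iff, Ideal.span_singleton_le_iff_mem, Ideal.mem_span_singleton_sup]
    refine ⟨⟨↑v⁻¹, -(↑v⁻¹ * (a - v * b)), neg_mem (Ideal.mul_mem_left _ _ h), ?_⟩, le_sup_right⟩
    linear_combination b * v.inv_mul

theorem MvPolynomial.derivation_algHom_comm_of_X {σ R B : Type*} [CommSemiring R]
    [CommSemiring B] [Algebra R B] (φ : MvPolynomial σ R →ₐ[R] B) (D : Derivation R B B)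
    (D' : Derivation R (MvPolynomial σ R) (MvPolynomial σ R))
    (h : ∀ j, D (φ (X j)) = φ (D' (X j))) (p : MvPolynomial σ R) :
    D (φ p) = φ (D' p) := by
  induction p using MvPolynomial.induction_on with
  | C a => simp
  | add p q hp hq => simp only [map_add, hp, hq]
  | mul_X p j hp => simp only [map_mul, Derivation.leibniz, smul_eq_mul, map_add, hp, h]

theorem pderiv_dehom {k : Type*} [CommSemiring k] {n : ℕ}
    (f : MvPolynomial (Fin (n + 1)) k) (i : Fin n) :
    pderiv i (dehom k n f) = dehom k n (pderiv i.succ f) := by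
  refine derivation_algHom_comm_of_X _ _ _ (fun j => ?_) f
  cases j using Fin.cases <;> simp [dehom, pderiv_X, Pi.single_apply]

theorem MvPolynomial.IsHomogeneous.dehom_euler {k : Type*} [CommSemiring k] {n d : ℕ}
    {f : MvPolynomial (Fin (n + 1)) k} (hf : f.IsHomogeneous d) :
    dehom k n (pderiv 0 f) + ∑ l : Fin n, X l * dehom k n (pderiv l.succ f)
      = d • dehom k n f := by
  rw [← map_nsmul, ← hf.sum_X_mul_pderiv, map_sum, Fin.sum_univ_succ]
  simp [dehom]

theorem stmt8_general (k : Type*) [Field k] (n : ℕ) (d : ℕ)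
    (hd : (d : k) ≠ 0)
    (f : MvPolynomial (Fin (n + 1)) k) (hf : f.IsHomogeneous d) :
    Ideal.span (Set.range fun i : Fin (n + 1) => dehom k n (pderiv i f))
      = Ideal.span
          (insert (dehom k n f)
            (Set.range fun i : Fin n => pderiv i (dehom k n f))) := by
  rw [Fin.range_fin_succ]
  simp only [pderiv_dehom]
  apply Ideal.span_insert_eq_span_insert_of_sub_mem (u := C (d : k))
    ((isUnit_iff_ne_zero.mpr hd).map C)
  have hsum : dehom k n (pderiv 0 f) - C (d : k) * dehom k n f
      = -∑ l : Fin n, X l * dehom k n (pderiv l.succ f) := by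
    rw [map_natCast, ← nsmul_eq_mul, ← hf.dehom_euler]; ring
  rw [hsum]
  exact neg_mem (Ideal.sum_mem _ fun l _ =>
    Ideal.mul_mem_left _ _ (Ideal.subset_span ⟨l, rfl⟩))

/-- For `f` homogeneous of degree `d` with `d ≠ 0` in `k`, the dehomogenized
jacobian ideal `((f₀)♭, …, (fₙ)♭)` equals the Tjurina ideal
`(f♭, ∂f♭/∂x₁, …, ∂f♭/∂xₙ)` of the dehomogenization `f♭`. -/
theorem stmt8 (k : Type*) [Field k] (n : ℕ) (hn : 1 ≤ n) (d : ℕ)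
    (hd : (d : k) ≠ 0)
    (f : MvPolynomial (Fin (n + 1)) k) (hf : f.IsHomogeneous d) :
    Ideal.span (Set.range fun i : Fin (n + 1) => dehom k n (pderiv i f))
      = Ideal.span
          (insert (dehom k n f)
            (Set.range fun i : Fin n => pderiv i (dehom k n f))) :=
  stmt8_general k n d hd f hf
end

section
/- Let k be a field of characteristic 101. Set φ₀ = x z², φ₁ = −49 y² z, φ₂ = 50 y³ and θ₀ = −37 x z², θ₁ = −3 y² z, θ₂ = y³ in k[x,y,z]. Then there exists a nonzero polynomial h ∈ k[x,y,z] such that θ₀(φ₀,φ₁,φ₂) = h·x, θ₁(φ₀,φ₁,φ₂) = h·y, and θ₂(φ₀,φ₁,φ₂) = h·z. (Hence the polar map (x : y : z) ↦ (xz² : −49y²z : 50y³) of the curve V(z⁵⁰(y³+x²z)⁵¹) in characteristic 101 is birational, with inverse (x : y : z) ↦ (−37xz² : −3y²z : y³).) -/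
open MvPolynomial

/-! Both maps are monomial, so the composite is computed coefficientwise: with
`φ = (xz², a y²z, b y³)` and `θ = (c xz², d y²z, y³)` one gets
`θ ∘ φ = y⁶z² · (c b² x, d a² b y, a³ z)`. For `a = -49, b = 50, c = -37, d = -3` the three
coefficients `c b²`, `d a² b`, `a³` all reduce to `16` modulo `101`. -/

theorem aeval_monomial_polar_maps {R : Type*} [CommSemiring R] (a b c d : R)
    (φ : Fin 3 → MvPolynomial (Fin 3) R)
    (hφ0 : φ 0 = X 0 * X 2 ^ 2) (hφ1 : φ 1 = C a * X 1 ^ 2 * X 2) (hφ2 : φ 2 = C b * X 1 ^ 3) :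
    aeval φ (C c * (X 0 * X 2 ^ 2)) = C (c * b ^ 2) * (X 1 ^ 6 * X 2 ^ 2) * X 0 ∧
      aeval φ (C d * (X 1 ^ 2 * X 2)) = C (d * a ^ 2 * b) * (X 1 ^ 6 * X 2 ^ 2) * X 1 ∧
      aeval φ (X 1 ^ 3 : MvPolynomial (Fin 3) R) = C (a ^ 3) * (X 1 ^ 6 * X 2 ^ 2) * X 2 := by
  simp only [map_mul, map_pow, aeval_C, aeval_X, hφ0, hφ1, hφ2, algebraMap_eq]
  refine ⟨?_, ?_, ?_⟩ <;> ring

theorem polar_coefficients_char_101 (k : Type*) [CommRing k] [CharP k 101] :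
    (-37 : k) * 50 ^ 2 = 16 ∧ (-3 : k) * (-49) ^ 2 * 50 = 16 ∧ (-49 : k) ^ 3 = 16 := by
  have h101 : (101 : k) = 0 := by exact_mod_cast CharP.cast_eq_zero k 101
  refine ⟨?_, ?_, ?_⟩
  · linear_combination (-916 : k) * h101
  · linear_combination (-3566 : k) * h101
  · linear_combination (-1165 : k) * h101

/-- In characteristic 101, the polar map `(x : y : z) ↦ (xz² : -49y²z : 50y³)` of
the curve `V(z⁵⁰(y³+x²z)⁵¹)` is birational with inverse
`(x : y : z) ↦ (-37xz² : -3y²z : y³)`: substituting `φ = (xz², -49y²z, 50y³)` into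
`θ = (-37xz², -3y²z, y³)` yields a nonzero common polynomial multiple of
`(x, y, z)`.  (Here `x = X 0`, `y = X 1`, `z = X 2`.) -/
theorem stmt12 (k : Type*) [Field k] [CharP k 101]
    (φ θ : Fin 3 → MvPolynomial (Fin 3) k)
    (hφ0 : φ 0 = X 0 * X 2 ^ 2)
    (hφ1 : φ 1 = -49 * X 1 ^ 2 * X 2)
    (hφ2 : φ 2 = 50 * X 1 ^ 3)
    (hθ0 : θ 0 = -37 * (X 0 * X 2 ^ 2))
    (hθ1 : θ 1 = -3 * (X 1 ^ 2 * X 2))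
    (hθ2 : θ 2 = X 1 ^ 3) :
    ∃ h : MvPolynomial (Fin 3) k, h ≠ 0 ∧
      aeval φ (θ 0) = h * X 0 ∧
      aeval φ (θ 1) = h * X 1 ∧
      aeval φ (θ 2) = h * X 2 := by
  have hC : ∀ n : ℕ, [n.AtLeastTwo] →
      (OfNat.ofNat n : MvPolynomial (Fin 3) k) = C (OfNat.ofNat n) :=
    fun n _ => (map_ofNat C n).symm
  obtain ⟨h0, h1, h2⟩ := aeval_monomial_polar_maps (-49 : k) 50 (-37) (-3) φ
    hφ0 (by rw [hφ1, hC, map_neg]) (by rw [hφ2, hC])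
  obtain ⟨c0, c1, c2⟩ := polar_coefficients_char_101 k
  have h16 : (16 : k) ≠ 0 := by
    exact_mod_cast (CharP.cast_eq_zero_iff k 101 16).not.mpr (by decide)
  refine ⟨C 16 * (X 1 ^ 6 * X 2 ^ 2), ?_, ?_, ?_, ?_⟩
  · exact mul_ne_zero (C_ne_zero.mpr h16) (mul_ne_zero (pow_ne_zero _ (X_ne_zero 1))
      (pow_ne_zero _ (X_ne_zero 2)))
  · rw [hθ0, hC, ← map_neg, h0, c0]
  · rw [hθ1, hC, ← map_neg, h1, c1]
  · rw [hθ2, h2, c2]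
end
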